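/- Let A be a C*-algebra, d : A → A a derivation, and I an essential closed two-sided ideal of A. Then there exists a unique derivation D : M(I) → M(I) of the multiplier algebra of I such that D(ι_I(a)) = ι_I(d(a)) for all a ∈ A, where ι_I : A → M(I) is the canonical (injective) *-homomorphism given by left and right multiplication on I. In particular, d extends to a derivation of M(I) under the identification of A with its image in M(I). -/

import Mathlib

open scoped MultiplierAlgebra

/-!
A derivation `d` of `A` maps `I` into itself: `d (x * y) = d x * y + x * d y` lies in `I` for
`x, y ∈ I`, and a C⋆-algebra is spanned by products, since it is spanned by its positive elements
`a = √a * √a`. The restriction `δ` of `d` to `I` extends to `𝓜(ℂ, I)` by the commutator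
`m ↦ δ * m - m * δ`, taken componentwise on double centralizers. For uniqueness, `m * x ∈ I` for
`x ∈ I`, so by the Leibniz rule two derivations agreeing on `I` differ by a multiplier that
annihilates `I`; in a C⋆-algebra such a multiplier vanishes.
-/

theorem LinearIsometry.exists_comp_eq_of_range_le {𝕜 E F G : Type*} [NontriviallyNormedField 𝕜]
    [NormedAddCommGroup E] [NormedAddCommGroup F] [NormedAddCommGroup G]
    [NormedSpace 𝕜 E] [NormedSpace 𝕜 F] [NormedSpace 𝕜 G]
    (j : F →ₗᵢ[𝕜] G) (f : E →L[𝕜] G)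
    (h : LinearMap.range (f : E →ₗ[𝕜] G) ≤ LinearMap.range j.toLinearMap) :
    ∃ g : E →L[𝕜] F, ∀ x, j (g x) = f x :=
  ⟨(j.equivRange.symm : LinearMap.range j.toLinearMap →L[𝕜] F).comp
      (f.codRestrict _ fun x => h ⟨x, rfl⟩),
    fun _ => congrArg Subtype.val (j.equivRange.apply_symm_apply _)⟩

theorem CStarAlgebra.range_le_of_forall_map_mul_mem {A M : Type*} [NonUnitalCStarAlgebra A]
    [AddCommGroup M] [Module ℂ M] (f : A →ₗ[ℂ] M) (p : Submodule ℂ M)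
    (h : ∀ x y, f (x * y) ∈ p) : LinearMap.range f ≤ p := by
  let _ := CStarAlgebra.spectralOrder A
  let _ := CStarAlgebra.spectralOrderedRing A
  rintro _ ⟨x, rfl⟩
  have hspan : Submodule.span ℂ {a : A | 0 ≤ a} ≤ p.comap f :=
    Submodule.span_le.mpr fun a ha => CFC.sqrt_mul_sqrt_self a ha ▸ h _ _
  exact hspan (CStarAlgebra.span_nonneg (A := A) ▸ Submodule.mem_top)

theorem norm_mul_sub_mul_le {R : Type*} [NonUnitalSeminormedRing R] (a b : R) :
    ‖a * b - b * a‖ ≤ 2 * ‖a‖ * ‖b‖ :=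
  calc ‖a * b - b * a‖ ≤ ‖a‖ * ‖b‖ + ‖b‖ * ‖a‖ :=
        (norm_sub_le _ _).trans (add_le_add (norm_mul_le a b) (norm_mul_le b a))
    _ = 2 * ‖a‖ * ‖b‖ := by ring

namespace CStarRing

variable {A : Type*} [NonUnitalNormedRing A] [StarRing A] [CStarRing A]

theorem eq_zero_of_forall_mul_left_eq_zero {w : A} (h : ∀ x, x * w = 0) : w = 0 :=
  (star_mul_self_eq_zero_iff w).mp (h _)

theorem eq_zero_of_forall_mul_right_eq_zero {w : A} (h : ∀ x, w * x = 0) : w = 0 :=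
  (mul_star_self_eq_zero_iff w).mp (h _)

end CStarRing

namespace DoubleCentralizer

variable {𝕜 A : Type*} [NontriviallyNormedField 𝕜] [NonUnitalNormedRing A] [NormedSpace 𝕜 A]
  [SMulCommClass 𝕜 A A] [IsScalarTower 𝕜 A A]

section Derivation

theorem norm_eq_max (m : 𝓜(𝕜, A)) : ‖m‖ = max ‖m.fst‖ ‖m.snd‖ := rfl

variable (δ : A →L[𝕜] A) (hδ : ∀ x y, δ (x * y) = δ x * y + x * δ y)

noncomputable def extendDerivation : 𝓜(𝕜, A) →L[𝕜] 𝓜(𝕜, A) :=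
  LinearMap.mkContinuous
    { toFun m :=
        { fst := δ * m.fst - m.fst * δ
          snd := δ * m.snd - m.snd * δ
          central x y := by
            show (δ (m.snd x) - m.snd (δ x)) * y = x * (δ (m.fst y) - m.fst (δ y))
            have hleib : δ (m.snd x) * y = δ x * m.fst y + x * δ (m.fst y) - m.snd x * δ y := by
              rw [eq_sub_iff_add_eq, ← hδ, m.central, hδ]
            rw [sub_mul, mul_sub, hleib, m.central, m.central]
            abel }
      map_add' m n := by
        ext1; ext1 <;> simp only [add_toProd, Prod.fst_add, Prod.snd_add] <;> noncomm_ring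
      map_smul' c m := by
        ext1; ext1 <;> simp only [smul_toProd, Prod.smul_fst, Prod.smul_snd, RingHom.id_apply,
          mul_smul_comm, smul_mul_assoc, smul_sub] }
    (2 * ‖δ‖) fun m => by
      simp only [LinearMap.coe_mk, AddHom.coe_mk, norm_eq_max,
        mul_max_of_nonneg _ _ (by positivity : (0 : ℝ) ≤ 2 * ‖δ‖)]
      exact max_le_max (norm_mul_sub_mul_le _ _) (norm_mul_sub_mul_le _ _)

@[simp]
theorem extendDerivation_fst (m : 𝓜(𝕜, A)) :
    (extendDerivation δ hδ m).fst = δ * m.fst - m.fst * δ :=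
  rfl

@[simp]
theorem extendDerivation_snd (m : 𝓜(𝕜, A)) :
    (extendDerivation δ hδ m).snd = δ * m.snd - m.snd * δ :=
  rfl

theorem extendDerivation_mul (m n : 𝓜(𝕜, A)) :
    extendDerivation δ hδ (m * n) = extendDerivation δ hδ m * n + m * extendDerivation δ hδ n := by
  ext1; ext1 <;> simp only [extendDerivation_fst, extendDerivation_snd, mul_fst, mul_snd,
    add_toProd, Prod.fst_add, Prod.snd_add] <;> noncomm_ring

end Derivation

section CStarRing

variable [StarRing A] [CStarRing A]

theorem fst_mul (m : 𝓜(𝕜, A)) (x y : A) : m.fst (x * y) = m.fst x * y := by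
  refine sub_eq_zero.mp (CStarRing.eq_zero_of_forall_mul_left_eq_zero fun z => ?_)
  rw [mul_sub, ← m.central, ← mul_assoc z, ← m.central, mul_assoc, sub_self]

theorem mul_coe (m : 𝓜(𝕜, A)) (x : A) : m * (x : 𝓜(𝕜, A)) = (m.fst x : 𝓜(𝕜, A)) := by
  ext y
  · simp [fst_mul]
  · simp [m.central]

theorem eq_zero_of_forall_mul_coe_eq_zero {n : 𝓜(𝕜, A)} (h : ∀ x : A, n * (x : 𝓜(𝕜, A)) = 0) :
    n = 0 := by
  have hsnd : n.snd = 0 := ContinuousLinearMap.ext fun y =>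
    CStarRing.eq_zero_of_forall_mul_right_eq_zero fun x => by
      simpa using congr($(h x).snd y)
  rw [← norm_eq_zero, ← norm_snd, hsnd, norm_zero]

theorem eq_of_leibniz_of_eq_on_coe {D₁ D₂ : 𝓜(𝕜, A) → 𝓜(𝕜, A)}
    (h₁ : ∀ m n, D₁ (m * n) = D₁ m * n + m * D₁ n) (h₂ : ∀ m n, D₂ (m * n) = D₂ m * n + m * D₂ n)
    (h : ∀ x : A, D₁ x = D₂ x) : D₁ = D₂ := by
  funext m
  refine sub_eq_zero.mp (eq_zero_of_forall_mul_coe_eq_zero fun x => ?_)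
  have e₁ := h₁ m x
  have e₂ := h₂ m x
  rw [mul_coe, h] at e₁
  rw [mul_coe] at e₂
  rw [sub_mul, eq_sub_of_add_eq e₁.symm, eq_sub_of_add_eq e₂.symm, h, sub_self]

end CStarRing

end DoubleCentralizer

open DoubleCentralizer in
theorem derivation_extends_uniquely_to_multiplier_algebra_of_essential_ideal_general
    {A I : Type*} [NonUnitalCStarAlgebra A] [NonUnitalCStarAlgebra I]
    (d : A →L[ℂ] A) (hd : ∀ x y : A, d (x * y) = d x * y + x * d y)
    (j : I →⋆ₙₐ[ℂ] A) (hj : Isometry j)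
    (hideal : ∀ (a : A) (x : I), a * j x ∈ Set.range j ∧ j x * a ∈ Set.range j)
    (ι : A →⋆ₙₐ[ℂ] 𝓜(ℂ, I))
    (hι : ∀ (a : A) (x : I), j ((ι a).fst x) = a * j x ∧ j ((ι a).snd x) = j x * a) :
    ∃! D : 𝓜(ℂ, I) →L[ℂ] 𝓜(ℂ, I),
      (∀ x y : 𝓜(ℂ, I), D (x * y) = D x * y + x * D y) ∧
      ∀ a : A, D (ι a) = ι (d a) := by
  let jL : I →ₗᵢ[ℂ] A := LinearMap.toLinearIsometry (j : I →ₗ[ℂ] A) hj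
  have hd_range : LinearMap.range ((d.comp jL.toContinuousLinearMap : I →L[ℂ] A) : I →ₗ[ℂ] A) ≤
      LinearMap.range jL.toLinearMap :=
    CStarAlgebra.range_le_of_forall_map_mul_mem _ _ fun x y => by
      have hmem : ∀ a ∈ Set.range j, a ∈ LinearMap.range jL.toLinearMap := fun _ h => h
      show d (j (x * y)) ∈ _
      rw [map_mul, hd]
      exact add_mem (hmem _ (hideal _ _).1) (hmem _ (hideal _ _).2)
  obtain ⟨δ, hjδ⟩ : ∃ δ : I →L[ℂ] I, ∀ x, j (δ x) = d (j x) :=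
    jL.exists_comp_eq_of_range_le _ hd_range
  have hδ : ∀ x y, δ (x * y) = δ x * y + x * δ y := fun x y => hj.injective <| by
    simp [hjδ, hd]
  have hι_coe : ∀ x : I, ι (j x) = x := fun x => by
    ext y <;> apply hj.injective <;> simp [hι]
  have hD_ι : ∀ a, extendDerivation δ hδ (ι a) = ι (d a) := fun a => by
    ext y <;> apply hj.injective <;> simp [hι, hjδ, hd]
  refine ⟨extendDerivation δ hδ, ⟨extendDerivation_mul δ hδ, hD_ι⟩, fun D ⟨hD, hDι⟩ => ?_⟩
  exact DFunLike.coe_injective <| eq_of_leibniz_of_eq_on_coe hD (extendDerivation_mul δ hδ)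
    fun x => by rw [← hι_coe, hDι, hD_ι]

/-- Let `A` be a C*-algebra, `d : A → A` a derivation, and `I` an essential closed two-sided
ideal of `A` (presented abstractly via an isometric *-homomorphism `j : I → A` whose range is an
essential closed two-sided ideal of `A`).  Then there is a unique derivation `D` of the
multiplier algebra `𝓜(ℂ, I)` of `I` such that `D (ι a) = ι (d a)` for all `a ∈ A`, where
`ι : A → 𝓜(ℂ, I)` is the canonical (injective) *-homomorphism given by left and right
multiplication on `I`. -/
theorem derivation_extends_uniquely_to_multiplier_algebra_of_essential_ideal
    {A I : Type*} [NonUnitalCStarAlgebra A] [NonUnitalCStarAlgebra I]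
    (d : A →L[ℂ] A) (hd : ∀ x y : A, d (x * y) = d x * y + x * d y)
    (j : I →⋆ₙₐ[ℂ] A) (hj : Isometry j) (hclosed : IsClosed (Set.range j))
    (hideal : ∀ (a : A) (x : I), a * j x ∈ Set.range j ∧ j x * a ∈ Set.range j)
    (hess : ∀ a : A, (∀ x : I, a * j x = 0) → a = 0)
    (ι : A →⋆ₙₐ[ℂ] 𝓜(ℂ, I))
    (hι : ∀ (a : A) (x : I), j ((ι a).fst x) = a * j x ∧ j ((ι a).snd x) = j x * a) :
    ∃! D : 𝓜(ℂ, I) →L[ℂ] 𝓜(ℂ, I),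
      (∀ x y : 𝓜(ℂ, I), D (x * y) = D x * y + x * D y) ∧
      ∀ a : A, D (ι a) = ι (d a) :=
  derivation_extends_uniquely_to_multiplier_algebra_of_essential_ideal_general d hd j hj hideal ι hι
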